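/- arXiv:2009.12955 — 4 statements merged into one kernel-verified Lean document; each statement's English description precedes it below -/
import Mathlib

section
/- If 1 ≤ n/α ≤ 4/3 then T(n, α+1, 4) = n − α, assuming the Thomassé–Yeo inequality e(H) ≥ 4v(H) − (21/4)α(H) for all 4-graphs H and the known value T(5,4,4) ≤ 5 and T(4,4,4) ≤ 1 as building blocks. In particular, for integers n, α with α ≤ n ≤ 4α/3, the minimum number of edges in an n-vertex 4-graph with independence number at most α equals n − α. -/
open Finset

/-- `turanT n k r` : minimum number of edges in an `r`-graph on `n` vertices with
independence number less than `k`; `⊤` if no such graph exists. -/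
noncomputable def turanT (n k r : ℕ) : ℕ∞ :=
  sInf {c : ℕ∞ | ∃ E : Finset (Finset (Fin n)),
    (∀ e ∈ E, e.card = r) ∧
    (∀ A : Finset (Fin n), A.card = k → ∃ e ∈ E, e ⊆ A) ∧
    (E.card : ℕ∞) = c}

/-- The independence number of a hypergraph given by its edge set. -/
noncomputable def indepNum {V : Type} [Fintype V] [DecidableEq V]
    (E : Finset (Finset V)) : ℕ :=
  ((Finset.univ : Finset V).powerset.filter fun A => ∀ e ∈ E, ¬ e ⊆ A).sup Finset.card

/-!
The lower bound is a transversal argument: choosing one vertex from each edge of a 4-graph `E`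
leaves at least `n - |E|` vertices spanning no edge, so `|E| ≥ n - α` if `E` has no independent
set of size `α + 1`. For the upper bound, `4(n - α) ≤ n`
leaves room for `n - α` pairwise disjoint edges; a set of `α + 1` vertices missing a vertex of
each of them would have a complement of size at least `n - α`, which is impossible.
-/

section Hypergraph

variable {V : Type*} [DecidableEq V]

lemma exists_transversal_card_le (E : Finset (Finset V)) (hE : ∀ e ∈ E, e.Nonempty) :
    ∃ T : Finset V, #T ≤ #E ∧ ∀ e ∈ E, ¬ Disjoint e T := by
  choose f hf using hE
  refine ⟨E.attach.image fun e => f e.1 e.2, card_image_le.trans_eq card_attach, ?_⟩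
  intro e he
  exact not_disjoint_iff.2 ⟨f e he, hf e he, mem_image.2 ⟨⟨e, he⟩, mem_attach _ _, rfl⟩⟩

lemma card_le_card_of_pairwiseDisjoint_of_forall_not_disjoint {E : Finset (Finset V)}
    (hdisj : (E : Set (Finset V)).PairwiseDisjoint id) (B : Finset V)
    (hB : ∀ e ∈ E, ¬ Disjoint e B) : #E ≤ #B :=
  calc #E ≤ #(E.biUnion fun e => e ∩ B) :=
        card_le_card_biUnion (hdisj.mono fun _ => inter_subset_left)
          fun e he => not_disjoint_iff_nonempty_inter.1 (hB e he)
    _ ≤ #B := card_le_card (biUnion_subset.2 fun _ _ => inter_subset_right)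

variable [Fintype V]

lemma exists_pairwiseDisjoint_uniform_family {r m : ℕ} (hr : 0 < r) (h : m * r ≤ Fintype.card V) :
    ∃ E : Finset (Finset V), #E = m ∧ (∀ e ∈ E, #e = r) ∧
      (E : Set (Finset V)).PairwiseDisjoint id := by
  obtain ⟨g⟩ : Nonempty (Fin m × Fin r ↪ V) :=
    Function.Embedding.nonempty_of_card_le (by simpa using h)
  let block (i : Fin m) : Finset V :=
    univ.map ⟨fun j => g (i, j), fun j j' hj => (Prod.ext_iff.1 (g.injective hj)).2⟩
  have hblock : Pairwise fun i i' => Disjoint (block i) (block i') := by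
    intro i i' hii'
    simp only [block, disjoint_left, mem_map, mem_univ, true_and]
    rintro _ ⟨j, rfl⟩ ⟨j', hj'⟩
    exact hii' (Prod.ext_iff.1 (g.injective hj')).1.symm
  have hinj : Function.Injective block := fun i i' hii' => by
    by_contra hne
    have hmem : g (i, ⟨0, hr⟩) ∈ block i := mem_map_of_mem _ (mem_univ _)
    exact disjoint_left.1 (hblock hne) hmem (hii' ▸ hmem)
  refine ⟨univ.image block, by simp [card_image_of_injective _ hinj], by simp [block], ?_⟩
  rintro _ he _ he' hne
  obtain ⟨i, -, rfl⟩ := mem_image.1 he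
  obtain ⟨i', -, rfl⟩ := mem_image.1 he'
  exact hblock fun h => hne (congrArg block h)

lemma card_sub_le_card_of_forall_exists_subset {E : Finset (Finset V)} {α : ℕ}
    (hE : ∀ e ∈ E, e.Nonempty) (hcov : ∀ A : Finset V, #A = α + 1 → ∃ e ∈ E, e ⊆ A) :
    Fintype.card V - α ≤ #E := by
  obtain ⟨T, hTE, hT⟩ := exists_transversal_card_le E hE
  by_contra! hlt
  obtain ⟨A, hAT, hA⟩ : ∃ A ⊆ Tᶜ, #A = α + 1 :=
    exists_subset_card_eq (by rw [card_compl]; omega)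
  obtain ⟨e, he, heA⟩ := hcov A hA
  exact hT e he (disjoint_of_subset_left heA (subset_compl_iff_disjoint_right.1 hAT))

lemma forall_exists_subset_of_pairwiseDisjoint {E : Finset (Finset V)} {α : ℕ}
    (hdisj : (E : Set (Finset V)).PairwiseDisjoint id) (hE : Fintype.card V - α ≤ #E) :
    ∀ A : Finset V, #A = α + 1 → ∃ e ∈ E, e ⊆ A := by
  intro A hA
  by_contra! hno
  have hmeet : ∀ e ∈ E, ¬ Disjoint e Aᶜ := fun e he hdis =>
    hno e he fun x hx => by simpa using disjoint_left.1 hdis hx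
  have hEA := card_le_card_of_pairwiseDisjoint_of_forall_not_disjoint hdisj Aᶜ hmeet
  have hA_le := card_le_univ A
  rw [card_compl] at hEA
  omega

end Hypergraph

theorem stmt_5_general
    (n α : ℕ) (h2 : 3 * n ≤ 4 * α) :
    turanT n (α + 1) 4 = ((n - α : ℕ) : ℕ∞) := by
  apply le_antisymm
  · obtain ⟨E, hcard, huniform, hdisj⟩ :=
      exists_pairwiseDisjoint_uniform_family (V := Fin n) (r := 4) (m := n - α) (by norm_num)
        (by simp only [Fintype.card_fin]; omega)
    refine sInf_le ⟨E, huniform, forall_exists_subset_of_pairwiseDisjoint hdisj ?_, by rw [hcard]⟩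
    simp [hcard]
  · refine le_sInf ?_
    rintro _ ⟨E, huniform, hcov, rfl⟩
    have hne : ∀ e ∈ E, e.Nonempty := fun e he => card_pos.1 (by rw [huniform e he]; norm_num)
    have hlow := card_sub_le_card_of_forall_exists_subset hne hcov
    rw [Fintype.card_fin] at hlow
    exact_mod_cast hlow

theorem stmt_5
    (hTY : ∀ (n : ℕ) (E : Finset (Finset (Fin n))), (∀ e ∈ E, e.card = 4) →
      ((n : ℚ) - indepNum E) ≤ (5 * n + 4 * E.card) / 21)
    (hT5 : turanT 5 4 4 ≤ 5) (hT4 : turanT 4 4 4 ≤ 1)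
    (n α : ℕ) (h1 : α ≤ n) (h2 : 3 * n ≤ 4 * α) :
    turanT n (α + 1) 4 = ((n - α : ℕ) : ℕ∞) :=
  stmt_5_general n α h2
end

section
/- Let H be a 4-graph, and for each vertex w ∈ V(H) let I_w⁰, I_w¹ ⊆ V(H) be critical subsets not containing w (i.e., α(H − I_wⁱ) < α(H)). Construct the expansion 𝓗 as in the paper (blow-up with replacement hypergraphs (V_w, E_w) of independence number 3 + d(w), cross edges E₁₁₁₁ over edges of H, all balanced 2+2 quadruples E₂₂, and parity-guided 3+1 quadruples E₃₁ using the parity function i(a,b,c)). Then α(𝓗) ≤ α(H) + 1. -/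
open Finset

/-- Independence number of the hypergraph with edge set `E`, restricted to the
induced subgraph on the vertex set `S`. -/
noncomputable def indepNumOn {V : Type} [Fintype V] [DecidableEq V]
    (E : Finset (Finset V)) (S : Finset V) : ℕ :=
  (S.powerset.filter fun A => ∀ e ∈ E, ¬ e ⊆ A).sup Finset.card

/-- The edge predicate of the expansion `𝓗` of a 4-graph `H = (V, EH)`, where the
vertex `w` of `H` is blown up into the replacement hypergraph `(U w, Ew w)`, and
`iF w t` is the parity of a triple `t ⊆ U w`.  The edges are: `E₁₁₁₁` (one vertex
above each vertex of an edge of `H`), `E₂₂` (two vertices above each of two distinct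
vertices of `H`), `E₃₁` (a triple `t` above `w` together with one vertex above some
vertex of the critical set `I_w^{iF w t}`), and the blown-up edges `Ew`. -/
def IsExpEdge {V : Type} [DecidableEq V] {U : V → Type} [∀ w, DecidableEq (U w)]
    (EH : Finset (Finset V)) (I0 I1 : V → Finset V)
    (Ew : ∀ w, Finset (Finset (U w))) (iF : ∀ w, Finset (U w) → Fin 2)
    (e : Finset (Σ w, U w)) : Prop :=
  -- E₁₁₁₁
  (e.card = 4 ∧ (e.image Sigma.fst).card = 4 ∧ e.image Sigma.fst ∈ EH) ∨
  -- E₂₂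
  (∃ (x y : V), x ≠ y ∧ ∃ (a b : U x) (c d : U y), a ≠ b ∧ c ≠ d ∧
    e = {⟨x, a⟩, ⟨x, b⟩, ⟨y, c⟩, ⟨y, d⟩}) ∨
  -- E₃₁
  (∃ (w : V) (t : Finset (U w)) (x : V) (u : U x),
    t.card = 3 ∧ x ∈ (if iF w t = 0 then I0 w else I1 w) ∧
    e = t.image (fun a => (⟨w, a⟩ : Σ w, U w)) ∪ {⟨x, u⟩}) ∨
  -- blown-up edges E_w
  (∃ (w : V) (b : Finset (U w)), b ∈ Ew w ∧
    e = b.image fun a => (⟨w, a⟩ : Σ w, U w))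

/-!
Let `A` be independent in the expansion and `A_w` its fiber over `w`. The `E₁₁₁₁` edges make
the projection `π(A)` independent in `H`, the `E₂₂` edges leave at most one fiber `A_w` with
two or more points, and the blown-up edges give `|A_w| ≤ 3 + d(w)`; hence
`|A| = |π(A)| - 1 + |A_w|`. A triple `t ⊆ A_w` forces `π(A)` to avoid `I_w^{i(t)}` through the
`E₃₁` edges. So `|π(A)| ≤ α(H)` if `|A_w| = 2`, `|π(A)| ≤ α(H) - 1` by criticality if
`|A_w| = 3`, and if `|A_w| = 4` then `d(w) = 1`, the fiber holds triples of both parities and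
`|π(A)| ≤ α(H) - 2`.
-/

lemma card_le_indepNumOn {V : Type} [Fintype V] [DecidableEq V]
    {E : Finset (Finset V)} {S C : Finset V} (hCS : C ⊆ S) (hC : ∀ e ∈ E, ¬ e ⊆ C) :
    C.card ≤ indepNumOn E S :=
  le_sup (mem_filter.mpr ⟨mem_powerset.mpr hCS, hC⟩)

section Expansion

variable {V : Type} {U : V → Type}

noncomputable def fiber (A : Finset (Σ w, U w)) (w : V) : Finset (U w) :=
  A.preimage (Sigma.mk w) sigma_mk_injective.injOn

@[simp]
lemma mem_fiber {A : Finset (Σ w, U w)} {w : V} {u : U w} : u ∈ fiber A w ↔ ⟨w, u⟩ ∈ A :=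
  mem_preimage

variable [DecidableEq V]

lemma card_eq_sum_card_fiber (A : Finset (Σ w, U w)) :
    A.card = ∑ x ∈ A.image Sigma.fst, (fiber A x).card := by
  conv_lhs => rw [← sigma_image_fst_preimage_mk A]
  exact card_sigma _ _

lemma card_fiber_eq_one {A : Finset (Σ w, U w)} {x : V} (hx : x ∈ A.image Sigma.fst)
    (h : (fiber A x).card ≤ 1) : (fiber A x).card = 1 := by
  obtain ⟨p, hp, rfl⟩ := mem_image.mp hx
  have : 0 < (fiber A p.1).card := card_pos.mpr ⟨p.2, mem_fiber.mpr hp⟩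
  omega

lemma card_eq_card_image_fst {A : Finset (Σ w, U w)} (h : ∀ x, (fiber A x).card ≤ 1) :
    A.card = (A.image Sigma.fst).card := by
  rw [card_eq_sum_card_fiber, card_eq_sum_ones]
  exact sum_congr rfl fun x hx => card_fiber_eq_one hx (h x)

lemma card_add_one_eq {A : Finset (Σ w, U w)} {w : V} (hw : w ∈ A.image Sigma.fst)
    (h : ∀ x ≠ w, (fiber A x).card ≤ 1) :
    A.card + 1 = (A.image Sigma.fst).card + (fiber A w).card := by
  have hrest : ∑ x ∈ (A.image Sigma.fst).erase w, (fiber A x).card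
      = ((A.image Sigma.fst).erase w).card := by
    rw [card_eq_sum_ones]
    exact sum_congr rfl fun x hx =>
      card_fiber_eq_one (mem_of_mem_erase hx) (h x (ne_of_mem_erase hx))
  rw [card_eq_sum_card_fiber, ← add_sum_erase _ _ hw, hrest, card_erase_of_mem hw]
  have : 0 < (A.image Sigma.fst).card := card_pos.mpr ⟨w, hw⟩
  omega

variable [∀ w, DecidableEq (U w)] {EH : Finset (Finset V)} {I0 I1 : V → Finset V}
  {Ew : ∀ w, Finset (Finset (U w))} {iF : ∀ w, Finset (U w) → Fin 2}
  {A : Finset (Σ w, U w)}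

abbrev IsExpIndep (EH : Finset (Finset V)) (I0 I1 : V → Finset V)
    (Ew : ∀ w, Finset (Finset (U w))) (iF : ∀ w, Finset (U w) → Fin 2)
    (A : Finset (Σ w, U w)) : Prop :=
  ∀ e, IsExpEdge EH I0 I1 Ew iF e → ¬ e ⊆ A

lemma IsExpIndep.image_fst (hA : IsExpIndep EH I0 I1 Ew iF A) (hEH : ∀ e ∈ EH, e.card = 4) :
    ∀ e ∈ EH, ¬ e ⊆ A.image Sigma.fst := by
  intro e he hsub
  have hsurj : Set.SurjOn Sigma.fst (A : Set (Σ w, U w)) e := by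
    rw [Set.SurjOn, ← coe_image]
    exact coe_subset.mpr hsub
  obtain ⟨f, hfA, hinj, rfl⟩ := exists_subset_injOn_image_eq_of_surjOn _ _ hsurj
  have hf : f.card = 4 := by rw [← card_image_of_injOn hinj, hEH _ he]
  exact hA f (Or.inl ⟨hf, hEH _ he, he⟩) (coe_subset.mp hfA)

lemma IsExpIndep.card_fiber_le_one (hA : IsExpIndep EH I0 I1 Ew iF A) {w x : V}
    (hw : 1 < (fiber A w).card) (hxw : x ≠ w) : (fiber A x).card ≤ 1 := by
  by_contra! hx
  obtain ⟨a, ha, b, hb, hab⟩ := one_lt_card.mp hx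
  obtain ⟨c, hc, d, hd, hcd⟩ := one_lt_card.mp hw
  refine hA _ (Or.inr (Or.inl ⟨x, w, hxw, a, b, c, d, hab, hcd, rfl⟩)) ?_
  simp only [mem_fiber] at ha hb hc hd
  simp only [insert_subset_iff, singleton_subset_iff]
  exact ⟨ha, hb, hc, hd⟩

lemma IsExpIndep.not_exists_edge_subset_fiber (hA : IsExpIndep EH I0 I1 Ew iF A) (w : V) :
    ¬ ∃ b ∈ Ew w, b ⊆ fiber A w := by
  rintro ⟨b, hb, hbA⟩
  refine hA _ (Or.inr (Or.inr (Or.inr ⟨w, b, hb, rfl⟩))) ?_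
  intro p hp
  obtain ⟨a, ha, rfl⟩ := mem_image.mp hp
  exact mem_fiber.mp (hbA ha)

lemma IsExpIndep.card_fiber_lt (hA : IsExpIndep EH I0 I1 Ew iF A) {w : V} {n : ℕ}
    (hEw : ∀ S : Finset (U w), S.card = n → ∃ b ∈ Ew w, b ⊆ S) : (fiber A w).card < n := by
  by_contra! h
  obtain ⟨S, hS, hSn⟩ := exists_subset_card_eq h
  obtain ⟨b, hb, hbS⟩ := hEw S hSn
  exact hA.not_exists_edge_subset_fiber w ⟨b, hb, hbS.trans hS⟩

/-- `E₃₁` does not ask for `x ≠ w`, so for `x = w` the witnessing edge lies in the fiber. -/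
lemma IsExpIndep.image_fst_subset_compl [Fintype V] (hA : IsExpIndep EH I0 I1 Ew iF A)
    {w : V} {t : Finset (U w)}
    (ht : t ⊆ fiber A w) (ht3 : t.card = 3) :
    A.image Sigma.fst ⊆ (if iF w t = 0 then I0 w else I1 w)ᶜ := by
  intro x hx
  rw [mem_compl]
  intro hxI
  obtain ⟨⟨x, u⟩, hu, rfl⟩ := mem_image.mp hx
  refine hA _ (Or.inr (Or.inr (Or.inl ⟨w, t, x, u, ht3, hxI, rfl⟩))) ?_
  refine union_subset ?_ (singleton_subset_iff.mpr hu)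
  intro p hp
  obtain ⟨a, ha, rfl⟩ := mem_image.mp hp
  exact mem_fiber.mp (ht ha)

end Expansion

theorem stmt_7_general
    {V : Type} [Fintype V] [DecidableEq V]
    (EH : Finset (Finset V)) (hEH : ∀ e ∈ EH, e.card = 4)
    (U : V → Type) [∀ w, DecidableEq (U w)]
    (I0 I1 : V → Finset V) (d : V → ℕ)
    -- the sets `I_w^0`, `I_w^1` are critical
    (hcrit0 : ∀ w, indepNumOn EH (I0 w)ᶜ < indepNumOn EH Finset.univ)
    (hcrit1 : ∀ w, indepNumOn EH (I1 w)ᶜ < indepNumOn EH Finset.univ)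
    -- `d w = 1` if removing `I_w^0 ∪ I_w^1` decreases the independence number by 2
    (hd01 : ∀ w, d w ≤ 1)
    (hd : ∀ w, d w = 1 →
      indepNumOn EH (I0 w ∪ I1 w)ᶜ + 2 ≤ indepNumOn EH Finset.univ)
    -- replacement hypergraphs `(U w, Ew w)` with independence number `3 + d w`
    (Ew : ∀ w, Finset (Finset (U w)))
    (hEwα : ∀ w, ∀ S : Finset (U w), S.card = 4 + d w → ∃ b ∈ Ew w, b ⊆ S)
    -- parity function on triples: all triples are even when `d w = 0`, and when
    -- `d w = 1` every non-edge quadruple contains an even and an odd triple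
    (iF : ∀ w, Finset (U w) → Fin 2)
    (hiF1 : ∀ w, d w = 1 → ∀ Q : Finset (U w), Q.card = 4 →
      (¬ ∃ b ∈ Ew w, b ⊆ Q) →
      ∃ t0 ⊆ Q, ∃ t1 ⊆ Q, t0.card = 3 ∧ t1.card = 3 ∧ iF w t0 = 0 ∧ iF w t1 = 1)
    (A : Finset (Σ w, U w))
    (hA : ∀ e : Finset (Σ w, U w), IsExpEdge EH I0 I1 Ew iF e → ¬ e ⊆ A) :
    A.card ≤ indepNumOn EH Finset.univ + 1 := by
  have hA : IsExpIndep EH I0 I1 Ew iF A := hA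
  have hind := hA.image_fst hEH
  have hT := card_le_indepNumOn (subset_univ _) hind
  by_cases hsmall : ∀ x, (fiber A x).card ≤ 1
  · rw [card_eq_card_image_fst hsmall]
    omega
  obtain ⟨w, hw⟩ : ∃ w, 1 < (fiber A w).card := by simpa using hsmall
  obtain ⟨u, hu⟩ := card_pos.mp (by omega : 0 < (fiber A w).card)
  have hwA : w ∈ A.image Sigma.fst := mem_image_of_mem Sigma.fst (mem_fiber.mp hu)
  have hcount := card_add_one_eq hwA fun x hx => hA.card_fiber_le_one hw hx
  have hk := hA.card_fiber_lt (hEwα w)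
  have hdw := hd01 w
  rcases (by omega : (fiber A w).card = 2 ∨ (fiber A w).card = 3 ∨ (fiber A w).card = 4)
    with h | h | h
  · omega
  · have hcrit : indepNumOn EH (if iF w (fiber A w) = 0 then I0 w else I1 w)ᶜ
        < indepNumOn EH univ := by
      split_ifs
      exacts [hcrit0 w, hcrit1 w]
    have := card_le_indepNumOn (hA.image_fst_subset_compl subset_rfl h) hind
    omega
  · obtain ⟨t0, ht0, t1, ht1, ht0c, ht1c, hi0, hi1⟩ :=
      hiF1 w (by omega) _ h (hA.not_exists_edge_subset_fiber w)
    have h0 := hA.image_fst_subset_compl ht0 ht0c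
    have h1 := hA.image_fst_subset_compl ht1 ht1c
    rw [hi0, if_pos rfl] at h0
    rw [hi1, if_neg Fin.zero_lt_one.ne'] at h1
    have := card_le_indepNumOn (compl_union (I0 w) (I1 w) ▸ subset_inter h0 h1) hind
    have := hd w (by omega)
    omega

theorem stmt_7
    {V : Type} [Fintype V] [DecidableEq V]
    (EH : Finset (Finset V)) (hEH : ∀ e ∈ EH, e.card = 4)
    (U : V → Type) [∀ w, Fintype (U w)] [∀ w, DecidableEq (U w)]
    (I0 I1 : V → Finset V) (d : V → ℕ)
    (hI0 : ∀ w, w ∉ I0 w) (hI1 : ∀ w, w ∉ I1 w)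
    -- the sets `I_w^0`, `I_w^1` are critical
    (hcrit0 : ∀ w, indepNumOn EH (I0 w)ᶜ < indepNumOn EH Finset.univ)
    (hcrit1 : ∀ w, indepNumOn EH (I1 w)ᶜ < indepNumOn EH Finset.univ)
    -- `d w = 1` if removing `I_w^0 ∪ I_w^1` decreases the independence number by 2
    (hd01 : ∀ w, d w ≤ 1)
    (hd : ∀ w, d w = 1 →
      indepNumOn EH (I0 w ∪ I1 w)ᶜ + 2 ≤ indepNumOn EH Finset.univ)
    -- replacement hypergraphs `(U w, Ew w)` with independence number `3 + d w`
    (Ew : ∀ w, Finset (Finset (U w)))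
    (hEw4 : ∀ w, ∀ b ∈ Ew w, b.card = 4)
    (hEwα : ∀ w, ∀ S : Finset (U w), S.card = 4 + d w → ∃ b ∈ Ew w, b ⊆ S)
    -- parity function on triples: all triples are even when `d w = 0`, and when
    -- `d w = 1` every non-edge quadruple contains an even and an odd triple
    (iF : ∀ w, Finset (U w) → Fin 2)
    (hiF0 : ∀ w, d w = 0 → ∀ t, iF w t = 0)
    (hiF1 : ∀ w, d w = 1 → ∀ Q : Finset (U w), Q.card = 4 →
      (¬ ∃ b ∈ Ew w, b ⊆ Q) →
      ∃ t0 ⊆ Q, ∃ t1 ⊆ Q, t0.card = 3 ∧ t1.card = 3 ∧ iF w t0 = 0 ∧ iF w t1 = 1)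
    (A : Finset (Σ w, U w))
    (hA : ∀ e : Finset (Σ w, U w), IsExpEdge EH I0 I1 Ew iF e → ¬ e ⊆ A) :
    A.card ≤ indepNumOn EH Finset.univ + 1 :=
  stmt_7_general EH hEH U I0 I1 d hcrit0 hcrit1 hd01 hd Ew hEwα iF hiF1 A hA
end

section
/- In the circular construction C_m[G₀,…,G_{m−1}] with m ≥ 2, if α(Gᵢ) = αᵢ + 1 and α(Gᵢ ∩ Vᵢ′) ≤ αᵢ for every i ∈ Z/m, then α(C_m[G₀,…,G_{m−1}]) ≤ Σ_{i∈Z/m} αᵢ. -/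
open Finset

/-- Vertex set of the circular construction: `Wᵢ = Vᵢ' × V_{i+1}''`,
where `P i` plays the role of `Vᵢ'` and `Q i` that of `Vᵢ''`. -/
abbrev CVtx (m : ℕ) (P Q : ZMod m → Type) := Σ i : ZMod m, P i × Q (i + 1)

/-- The map `hᵢ : Wᵢ ∪ W_{i+1} → V(G_{i+1})`, sending `w ∈ Wᵢ` to `gᵢ(w) ∈ V_{i+1}''`
and `w ∈ W_{i+1}` to `f_{i+1}(w) ∈ V_{i+1}'` (and everything else to `none`). -/
def hmap {m : ℕ} {P Q : ZMod m → Type} (i : ZMod m) (v : CVtx m P Q) :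
    Option (P (i + 1) ⊕ Q (i + 1)) :=
  if h : v.1 = i then some (Sum.inr (cast (congrArg (fun j => Q (j + 1)) h) v.2.2))
  else if h' : v.1 = i + 1 then some (Sum.inl (cast (congrArg P h') v.2.1))
  else none

/-- First coordinate (within `Wᵢ`) of a vertex, `none` outside `Wᵢ`. -/
def fmap {m : ℕ} {P Q : ZMod m → Type} (i : ZMod m) (v : CVtx m P Q) :
    Option (P i) :=
  if h : v.1 = i then some (cast (congrArg P h) v.2.1) else none

/-- Edges `Eᵢ¹`: quadruples in `Wᵢ ∪ W_{i+1}` meeting `Wᵢ` in a single fiber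
`W_{i,x}` (i.e. `βᵢ = 1`), whose `hᵢ`-images form an edge of `G_{i+1}`. -/
def IsE1 {m : ℕ} {P Q : ZMod m → Type}
    [∀ i, DecidableEq (P i)] [∀ i, DecidableEq (Q i)]
    (EG : ∀ i : ZMod m, Finset (Finset (P i ⊕ Q i)))
    (i : ZMod m) (e : Finset (CVtx m P Q)) : Prop :=
  e.card = 4 ∧ (∃ v ∈ e, v.1 = i) ∧
  (∀ v ∈ e, ∀ w ∈ e, v.1 = i → w.1 = i → fmap i v = fmap i w) ∧
  ∃ b ∈ EG (i + 1), e.image (hmap i) = b.image some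

/-- Edges `Eᵢ²`: quadruples in `Wᵢ` consisting of two pairs lying in two
distinct fibers `W_{i,x₁}`, `W_{i,x₂}`. -/
def IsE2 {m : ℕ} {P Q : ZMod m → Type}
    [∀ i, DecidableEq (P i)] [∀ i, DecidableEq (Q i)] (i : ZMod m)
    (e : Finset (CVtx m P Q)) : Prop :=
  ∃ (x₁ x₂ : P i) (y₁ y₂ y₃ y₄ : Q (i + 1)), x₁ ≠ x₂ ∧ y₁ ≠ y₂ ∧ y₃ ≠ y₄ ∧
    e = {(⟨i, (x₁, y₁)⟩ : CVtx m P Q), ⟨i, (x₁, y₂)⟩, ⟨i, (x₂, y₃)⟩, ⟨i, (x₂, y₄)⟩}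

/-- Edges `Eᵢ⁴`: quadruples in `Wᵢ` with pairwise distinct first coordinates
forming an edge of `Gᵢ` inside `Vᵢ'`. -/
def IsE4 {m : ℕ} {P Q : ZMod m → Type}
    [∀ i, DecidableEq (P i)] [∀ i, DecidableEq (Q i)]
    (EG : ∀ i : ZMod m, Finset (Finset (P i ⊕ Q i)))
    (i : ZMod m) (e : Finset (CVtx m P Q)) : Prop :=
  e.card = 4 ∧ (∀ v ∈ e, v.1 = i) ∧
  ∃ s : Finset (P i), s.card = 4 ∧ s.image Sum.inl ∈ EG i ∧
    e.image (fmap i) = s.image some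

/-- Edge predicate of the circular construction `C_m[G₀,…,G_{m-1}]`. -/
def IsCircEdge {m : ℕ} {P Q : ZMod m → Type}
    [∀ i, DecidableEq (P i)] [∀ i, DecidableEq (Q i)]
    (EG : ∀ i : ZMod m, Finset (Finset (P i ⊕ Q i)))
    (e : Finset (CVtx m P Q)) : Prop :=
  ∃ i : ZMod m, IsE1 EG i e ∨ IsE2 i e ∨ IsE4 EG i e

variable {m : ℕ} {P Q : ZMod m → Type}

lemma fmap_mk (i : ZMod m) (p : P i × Q (i+1)) :
    fmap i (⟨i, p⟩ : CVtx m P Q) = some p.1 := dif_pos rfl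

lemma fmap_mk_ne {i j : ZMod m} (h : j ≠ i) (p : P j × Q (j+1)) :
    fmap i (⟨j, p⟩ : CVtx m P Q) = none := dif_neg h

lemma hmap_mk_self (i : ZMod m) (p : P i × Q (i+1)) :
    hmap i (⟨i, p⟩ : CVtx m P Q) = some (Sum.inr p.2) := dif_pos rfl

lemma hmap_mk_succ {i : ZMod m} (h : i + 1 ≠ i) (p : P (i+1) × Q (i+1+1)) :
    hmap i (⟨i+1, p⟩ : CVtx m P Q) = some (Sum.inl p.1) := by
  unfold hmap
  rw [dif_neg h, dif_pos rfl]
  rfl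

lemma hmap_eq_map_fmap {i : ZMod m} (v : CVtx m P Q) (h : v.1 ≠ i) :
    hmap i v = (fmap (i+1) v).map Sum.inl := by
  unfold hmap fmap
  rw [dif_neg h]
  by_cases h' : v.1 = i + 1
  · rw [dif_pos h', dif_pos h']; rfl
  · rw [dif_neg h', dif_neg h']; rfl

variable [∀ i, Fintype (P i)] [∀ i, Fintype (Q i)]
  [∀ i, DecidableEq (P i)] [∀ i, DecidableEq (Q i)]

def pairsOf (A : Finset (CVtx m P Q)) (i : ZMod m) : Finset (P i × Q (i+1)) :=
  Finset.univ.filter (fun p => (⟨i, p⟩ : CVtx m P Q) ∈ A)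

def SOf (A : Finset (CVtx m P Q)) (i : ZMod m) : Finset (P i) :=
  (pairsOf A i).image Prod.fst

def FOf (A : Finset (CVtx m P Q)) (i : ZMod m) (x : P i) : Finset (Q (i+1)) :=
  ((pairsOf A i).filter (fun p => p.1 = x)).image Prod.snd

lemma mem_pairsOf {A : Finset (CVtx m P Q)} {i : ZMod m} {p : P i × Q (i+1)} :
    p ∈ pairsOf A i ↔ (⟨i, p⟩ : CVtx m P Q) ∈ A := by
  simp [pairsOf]

lemma mem_FOf {A : Finset (CVtx m P Q)} {i : ZMod m} {x : P i} {y : Q (i+1)} :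
    y ∈ FOf A i x ↔ (x, y) ∈ pairsOf A i := by
  constructor
  · intro hy
    simp only [FOf, mem_image, mem_filter] at hy
    obtain ⟨p, ⟨hp, h1⟩, h2⟩ := hy
    have : p = (x, y) := Prod.ext h1 h2
    rwa [this] at hp
  · intro h
    simp only [FOf, mem_image, mem_filter]
    exact ⟨(x, y), ⟨h, rfl⟩, rfl⟩

lemma mem_SOf_iff {A : Finset (CVtx m P Q)} {i : ZMod m} {x : P i} :
    x ∈ SOf A i ↔ ∃ y, (x, y) ∈ pairsOf A i := by
  simp only [SOf, mem_image]
  constructor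
  · rintro ⟨p, hp, rfl⟩; exact ⟨p.2, hp⟩
  · rintro ⟨y, hy⟩; exact ⟨(x, y), hy, rfl⟩

/-- choose representatives in `A` above a set of first coordinates -/
lemma repr_exists (A : Finset (CVtx m P Q)) (j : ZMod m) (s : Finset (P j))
    (hs : s ⊆ SOf A j) :
    ∃ t : Finset (CVtx m P Q), t ⊆ A ∧ (∀ v ∈ t, v.1 = j) ∧
      t.image (fmap j) = s.image some ∧ t.card = s.card := by
  have hch : ∀ x : {x // x ∈ s}, ∃ y, (x.1, y) ∈ pairsOf A j := by
    intro x; exact mem_SOf_iff.1 (hs x.2)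
  choose y hy using hch
  refine ⟨s.attach.image (fun x => (⟨j, (x.1, y x)⟩ : CVtx m P Q)), ?_, ?_, ?_, ?_⟩
  · intro v hv
    simp only [mem_image, mem_attach, true_and] at hv
    obtain ⟨x, rfl⟩ := hv
    exact mem_pairsOf.1 (hy x)
  · intro v hv
    simp only [mem_image, mem_attach, true_and] at hv
    obtain ⟨x, rfl⟩ := hv
    rfl
  · rw [Finset.image_image]
    have h1 : ((fmap j) ∘ fun x : {x // x ∈ s} => (⟨j, (x.1, y x)⟩ : CVtx m P Q))
        = fun x => some x.1 := by
      funext x; exact fmap_mk j (x.1, y x)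
    rw [h1]
    have : (fun x : {x // x ∈ s} => some x.1) = some ∘ Subtype.val := rfl
    rw [this, ← Finset.image_image, Finset.attach_image_val]
  · rw [Finset.card_image_of_injective _ ?_, Finset.card_attach]
    intro a b hab
    have := (Sigma.mk.inj_iff.1 hab).2
    have : (a.1, y a) = (b.1, y b) := by
      exact eq_of_heq this
    exact Subtype.ext (congrArg Prod.fst this)

lemma indep_card_le {V : Type} [Fintype V] [DecidableEq V]
    (E : Finset (Finset V)) (S B : Finset V) (hB : B ⊆ S)
    (h : ∀ e ∈ E, ¬ e ⊆ B) : B.card ≤ indepNumOn E S :=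
  Finset.le_sup (Finset.mem_filter.2 ⟨Finset.mem_powerset.2 hB, h⟩)

variable (EG : ∀ i : ZMod m, Finset (Finset (P i ⊕ Q i)))

lemma noE4 {A : Finset (CVtx m P Q)}
    (hEG : ∀ i, ∀ b ∈ EG i, b.card = 4)
    (hA : ∀ e, IsCircEdge EG e → ¬ e ⊆ A) (j : ZMod m) :
    ∀ e ∈ EG j, ¬ e ⊆ (SOf A j).image Sum.inl := by
  intro e he hsub
  set s : Finset (P j) := (SOf A j).filter (fun x => Sum.inl x ∈ e) with hsdef
  have hes : e = s.image Sum.inl := by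
    ext z
    constructor
    · intro hz
      obtain ⟨x, hx, rfl⟩ := Finset.mem_image.1 (hsub hz)
      exact Finset.mem_image.2 ⟨x, Finset.mem_filter.2 ⟨hx, hz⟩, rfl⟩
    · intro hz
      obtain ⟨x, hx, rfl⟩ := Finset.mem_image.1 hz
      exact (Finset.mem_filter.1 hx).2
  have hscard : s.card = 4 := by
    have := hEG j e he
    rwa [hes, Finset.card_image_of_injective _ Sum.inl_injective] at this
  obtain ⟨t, htA, htj, htim, htcard⟩ :=
    repr_exists A j s (Finset.filter_subset _ _)
  refine hA t ⟨j, Or.inr (Or.inr ?_)⟩ htA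
  exact ⟨htcard.trans hscard, htj, s, hscard, hes ▸ he, htim⟩

lemma beta_le {A : Finset (CVtx m P Q)}
    (hEG : ∀ i, ∀ b ∈ EG i, b.card = 4)
    (hA : ∀ e, IsCircEdge EG e → ¬ e ⊆ A)
    (α : ZMod m → ℕ)
    (hα' : ∀ i, indepNumOn (EG i)
      (Finset.univ.filter fun v => Sum.isLeft v = true) ≤ α i)
    (j : ZMod m) : (SOf A j).card ≤ α j := by
  have h1 : ((SOf A j).image (Sum.inl : P j → P j ⊕ Q j)).card ≤ indepNumOn (EG j)
      (Finset.univ.filter fun v => Sum.isLeft v = true) := by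
    refine indep_card_le _ _ _ ?_ (noE4 EG hEG hA j)
    intro z hz
    obtain ⟨x, _, rfl⟩ := Finset.mem_image.1 hz
    simp
  rw [Finset.card_image_of_injective _ Sum.inl_injective] at h1
  exact h1.trans (hα' j)

lemma fiber_unique {A : Finset (CVtx m P Q)}
    (hA : ∀ e, IsCircEdge EG e → ¬ e ⊆ A)
    (i : ZMod m) {x₁ x₂ : P i} (h12 : x₁ ≠ x₂)
    (h1 : 2 ≤ (FOf A i x₁).card) (h2 : 2 ≤ (FOf A i x₂).card) : False := by
  obtain ⟨y₁, hy₁, y₂, hy₂, hne1⟩ := Finset.one_lt_card.1 h1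
  obtain ⟨y₃, hy₃, y₄, hy₄, hne2⟩ := Finset.one_lt_card.1 h2
  refine hA {(⟨i, (x₁, y₁)⟩ : CVtx m P Q), ⟨i, (x₁, y₂)⟩, ⟨i, (x₂, y₃)⟩, ⟨i, (x₂, y₄)⟩}
    ⟨i, Or.inr (Or.inl ⟨x₁, x₂, y₁, y₂, y₃, y₄, h12, hne1, hne2, rfl⟩)⟩ ?_
  intro v hv
  simp only [Finset.mem_insert, Finset.mem_singleton] at hv
  rcases hv with rfl | rfl | rfl | rfl
  · exact mem_pairsOf.1 (mem_FOf.1 hy₁)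
  · exact mem_pairsOf.1 (mem_FOf.1 hy₂)
  · exact mem_pairsOf.1 (mem_FOf.1 hy₃)
  · exact mem_pairsOf.1 (mem_FOf.1 hy₄)

lemma fiber_bound {A : Finset (CVtx m P Q)}
    (hEG : ∀ i, ∀ b ∈ EG i, b.card = 4)
    (hA : ∀ e, IsCircEdge EG e → ¬ e ⊆ A)
    (α : ZMod m → ℕ)
    (hα : ∀ i, indepNumOn (EG i) Finset.univ = α i + 1)
    (hone : ∀ i : ZMod m, i + 1 ≠ i)
    (i : ZMod m) (x : P i) :
    (FOf A i x).card + (SOf A (i+1)).card ≤ α (i+1) + 1 := by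
  set B : Finset (P (i+1) ⊕ Q (i+1)) :=
    (FOf A i x).image Sum.inr ∪ (SOf A (i+1)).image Sum.inl with hBdef
  have hBcard : B.card = (FOf A i x).card + (SOf A (i+1)).card := by
    rw [hBdef, Finset.card_union_of_disjoint, Finset.card_image_of_injective _
      Sum.inr_injective, Finset.card_image_of_injective _ Sum.inl_injective,
      Nat.add_comm]
    simp only [Finset.disjoint_left, Finset.mem_image]
    rintro z ⟨y, _, rfl⟩ ⟨w, _, h⟩
    exact Sum.inl_ne_inr h
  have hBindep : ∀ e ∈ EG (i+1), ¬ e ⊆ B := by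
    intro e he hsub
    set t' : Finset (Q (i+1)) := (FOf A i x).filter (fun y => Sum.inr y ∈ e) with ht'
    set s' : Finset (P (i+1)) := (SOf A (i+1)).filter (fun z => Sum.inl z ∈ e) with hs'
    have hedec : e = t'.image Sum.inr ∪ s'.image Sum.inl := by
      ext z
      constructor
      · intro hz
        rcases Finset.mem_union.1 (hsub hz) with h | h
        · obtain ⟨y, hy, rfl⟩ := Finset.mem_image.1 h
          exact Finset.mem_union.2 (Or.inl (Finset.mem_image.2
            ⟨y, Finset.mem_filter.2 ⟨hy, hz⟩, rfl⟩))
        · obtain ⟨w, hw, rfl⟩ := Finset.mem_image.1 h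
          exact Finset.mem_union.2 (Or.inr (Finset.mem_image.2
            ⟨w, Finset.mem_filter.2 ⟨hw, hz⟩, rfl⟩))
      · intro hz
        rcases Finset.mem_union.1 hz with h | h
        · obtain ⟨y, hy, rfl⟩ := Finset.mem_image.1 h
          exact (Finset.mem_filter.1 hy).2
        · obtain ⟨w, hw, rfl⟩ := Finset.mem_image.1 h
          exact (Finset.mem_filter.1 hw).2
    have hecard : t'.card + s'.card = 4 := by
      have h4 := hEG (i+1) e he
      rw [hedec, Finset.card_union_of_disjoint, Finset.card_image_of_injective _
        Sum.inr_injective, Finset.card_image_of_injective _ Sum.inl_injective] at h4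
      · exact h4
      · simp only [Finset.disjoint_left, Finset.mem_image]
        rintro z ⟨y, _, rfl⟩ ⟨w, _, h⟩
        exact Sum.inl_ne_inr h
    rcases Finset.eq_empty_or_nonempty t' with hte | htne
    · -- edge entirely inside inl (SOf (i+1)) : contradiction with noE4
      refine noE4 EG hEG hA (i+1) e he ?_
      rw [hedec, hte, Finset.image_empty, Finset.empty_union]
      exact Finset.image_subset_image (Finset.filter_subset _ _)
    · -- build an E1 edge
      obtain ⟨t, htA, htj, htim, htcard⟩ :=
        repr_exists A (i+1) s' (Finset.filter_subset _ _)
      set u : Finset (CVtx m P Q) :=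
        t'.image (fun y => (⟨i, (x, y)⟩ : CVtx m P Q)) with hu
      have hucard : u.card = t'.card := by
        rw [hu]
        apply Finset.card_image_of_injective
        intro a b hab
        have := (Sigma.mk.inj_iff.1 hab).2
        exact congrArg Prod.snd (eq_of_heq this)
      have humem : ∀ v ∈ u, ∃ y ∈ t', v = (⟨i, (x, y)⟩ : CVtx m P Q) := by
        intro v hv
        obtain ⟨y, hy, rfl⟩ := Finset.mem_image.1 hv
        exact ⟨y, hy, rfl⟩
      have hdisj : Disjoint u t := by
        simp only [Finset.disjoint_left]
        intro v hv hvt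
        obtain ⟨y, _, rfl⟩ := humem v hv
        exact hone i (htj _ hvt).symm
      refine hA (u ∪ t) ⟨i, Or.inl ?_⟩ ?_
      · refine ⟨?_, ?_, ?_, e, he, ?_⟩
        · rw [Finset.card_union_of_disjoint hdisj, hucard, htcard, hecard]
        · obtain ⟨y, hy⟩ := htne
          exact ⟨⟨i, (x, y)⟩, Finset.mem_union.2 (Or.inl (Finset.mem_image.2 ⟨y, hy, rfl⟩)), rfl⟩
        · intro v hv w hw hvi hwi
          have hv' : v ∈ u := by
            rcases Finset.mem_union.1 hv with h | h
            · exact h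
            · exact absurd (hvi.symm.trans (htj v h)).symm (hone i)
          have hw' : w ∈ u := by
            rcases Finset.mem_union.1 hw with h | h
            · exact h
            · exact absurd (hwi.symm.trans (htj w h)).symm (hone i)
          obtain ⟨y, _, rfl⟩ := humem v hv'
          obtain ⟨y', _, rfl⟩ := humem w hw'
          rw [fmap_mk, fmap_mk]
        · rw [Finset.image_union]
          have h1 : u.image (hmap i) = t'.image (fun y => some (Sum.inr y)) := by
            rw [hu, Finset.image_image]
            apply Finset.image_congr
            intro y _
            exact hmap_mk_self i (x, y)
          have h2 : t.image (hmap i) = s'.image (fun z => some (Sum.inl z)) := by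
            have : t.image (hmap i) = (t.image (fmap (i+1))).image (Option.map Sum.inl) := by
              rw [Finset.image_image]
              apply Finset.image_congr
              intro v hv
              exact hmap_eq_map_fmap v (by rw [htj v hv]; exact hone i)
            rw [this, htim, Finset.image_image]
            rfl
          rw [h1, h2, hedec, Finset.image_union, Finset.image_image, Finset.image_image]
          rfl
      · intro v hv
        rcases Finset.mem_union.1 hv with h | h
        · obtain ⟨y, hy, rfl⟩ := humem v h
          exact mem_pairsOf.1 (mem_FOf.1 (Finset.mem_filter.1 hy).1)
        · exact htA h
  calc (FOf A i x).card + (SOf A (i+1)).card = B.card := hBcard.symm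
    _ ≤ indepNumOn (EG (i+1)) Finset.univ :=
        indep_card_le _ _ _ (Finset.subset_univ _) hBindep
    _ = α (i+1) + 1 := hα (i+1)

lemma pairs_card_eq (A : Finset (CVtx m P Q)) (i : ZMod m) :
    (pairsOf A i).card = ∑ x ∈ SOf A i, (FOf A i x).card := by
  rw [Finset.card_eq_sum_card_fiberwise (f := Prod.fst) (t := SOf A i)
    (fun p hp => Finset.mem_image.2 ⟨p, hp, rfl⟩)]
  apply Finset.sum_congr rfl
  intro x _
  rw [FOf, Finset.card_image_of_injOn]
  intro p hp q hq hpq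
  have hp1 := (Finset.mem_filter.1 hp).2
  have hq1 := (Finset.mem_filter.1 hq).2
  exact Prod.ext (hp1.trans hq1.symm) hpq

lemma count_le {A : Finset (CVtx m P Q)}
    (hEG : ∀ i, ∀ b ∈ EG i, b.card = 4)
    (hA : ∀ e, IsCircEdge EG e → ¬ e ⊆ A)
    (α : ZMod m → ℕ)
    (hα : ∀ i, indepNumOn (EG i) Finset.univ = α i + 1)
    (hα' : ∀ i, indepNumOn (EG i)
      (Finset.univ.filter fun v => Sum.isLeft v = true) ≤ α i)
    (hone : ∀ i : ZMod m, i + 1 ≠ i)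
    (i : ZMod m) :
    (pairsOf A i).card + (SOf A (i+1)).card ≤ α (i+1) + (SOf A i).card := by
  have hb := beta_le EG hEG hA α hα' (i+1)
  rw [pairs_card_eq]
  by_cases hbig : ∃ x ∈ SOf A i, 2 ≤ (FOf A i x).card
  · obtain ⟨x₀, hx₀, hx₀2⟩ := hbig
    rw [← Finset.add_sum_erase _ _ hx₀]
    have hrest : ∑ x ∈ (SOf A i).erase x₀, (FOf A i x).card ≤ (SOf A i).card - 1 := by
      rw [← Finset.card_erase_of_mem hx₀]
      refine (Finset.sum_le_card_nsmul _ _ 1 ?_).trans (by simp)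
      intro x hx
      by_contra h
      push_neg at h
      exact fiber_unique EG hA i (Finset.ne_of_mem_erase hx) h hx₀2
    have hfb := fiber_bound EG hEG hA α hα hone i x₀
    have hpos : 1 ≤ (SOf A i).card := Finset.card_pos.2 ⟨x₀, hx₀⟩
    omega
  · push_neg at hbig
    have : ∑ x ∈ SOf A i, (FOf A i x).card ≤ (SOf A i).card := by
      refine (Finset.sum_le_card_nsmul _ _ 1 ?_).trans (by simp)
      intro x hx
      exact Nat.lt_succ_iff.mp (hbig x hx)
    omega

theorem stmt_8 (m : ℕ) [NeZero m] (hm : 2 ≤ m)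
    (P Q : ZMod m → Type) [∀ i, Fintype (P i)] [∀ i, Fintype (Q i)]
    [∀ i, DecidableEq (P i)] [∀ i, DecidableEq (Q i)]
    (EG : ∀ i : ZMod m, Finset (Finset (P i ⊕ Q i)))
    (hEG : ∀ i, ∀ b ∈ EG i, b.card = 4)
    (α : ZMod m → ℕ)
    (hα : ∀ i, indepNumOn (EG i) Finset.univ = α i + 1)
    (hα' : ∀ i, indepNumOn (EG i)
      (Finset.univ.filter fun v => Sum.isLeft v = true) ≤ α i)
    (A : Finset (CVtx m P Q))
    (hA : ∀ e, IsCircEdge EG e → ¬ e ⊆ A) :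
    A.card ≤ ∑ i : ZMod m, α i := by
  haveI : Fact (1 < m) := ⟨hm⟩
  have hone : ∀ i : ZMod m, i + 1 ≠ i := by
    intro i h
    have h1 : (1 : ZMod m) = 0 := by
      have := add_right_cancel (a := i) (b := (1 : ZMod m)) (c := i)
      calc (1 : ZMod m) = i + 1 - i := by ring
        _ = i - i := by rw [h]
        _ = 0 := by ring
    exact one_ne_zero h1
  have hcard : A.card = ∑ i : ZMod m, (pairsOf A i).card := by
    rw [Finset.card_eq_sum_card_fiberwise (f := Sigma.fst) (t := Finset.univ)
      (fun v _ => Finset.mem_univ _)]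
    apply Finset.sum_congr rfl
    intro i _
    have : A.filter (fun v => v.1 = i) = (pairsOf A i).image (Sigma.mk i) := by
      ext v
      obtain ⟨j, p⟩ := v
      simp only [Finset.mem_filter, Finset.mem_image]
      constructor
      · rintro ⟨hmem, h⟩
        cases h
        exact ⟨p, mem_pairsOf.2 hmem, rfl⟩
      · rintro ⟨q, hq, h⟩
        cases h
        exact ⟨mem_pairsOf.1 hq, rfl⟩
    rw [this, Finset.card_image_of_injective _ sigma_mk_injective]
  have hsum : ∑ i : ZMod m, ((pairsOf A i).card + (SOf A (i+1)).card)
      ≤ ∑ i : ZMod m, (α (i+1) + (SOf A i).card) :=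
    Finset.sum_le_sum (fun i _ => count_le EG hEG hA α hα hα' hone i)
  have hshift1 : ∑ i : ZMod m, (SOf A (i+1)).card = ∑ i : ZMod m, (SOf A i).card :=
    Fintype.sum_equiv (Equiv.addRight 1) _ _ (fun i => rfl)
  have hshift2 : ∑ i : ZMod m, α (i+1) = ∑ i : ZMod m, α i :=
    Fintype.sum_equiv (Equiv.addRight 1) _ _ (fun i => rfl)
  rw [Finset.sum_add_distrib, Finset.sum_add_distrib, hshift1, hshift2] at hsum
  omega
end

section
/- Consider the space V^k of k-tuples over Z/2 × Z/2, colored pairwise by c(x,y) = x_i + y_i where i = i(x,y) is the smallest index with x_i ≠ y_i. A triple {x,y,z} of distinct vectors is rainbow (the three pair-colors c(x,y), c(x,z), c(y,z) are pairwise distinct) if and only if i(x,y) = i(x,z) = i(y,z). Moreover, every non-rainbow triple has exactly one apex, where x is the apex of {x,y,z} if i(x,y) = i(x,z) < i(y,z). -/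
open Finset

abbrev G2 := ZMod 2 × ZMod 2

/-- `i` is the first coordinate where the distinct vectors `x, y ∈ ((ℤ/2)²)^k`
differ; the color of the pair `{x,y}` is then `x i + y i`. -/
def IsMinDiff {k : ℕ} (x y : Fin k → G2) (i : Fin k) : Prop :=
  x i ≠ y i ∧ ∀ j : Fin k, j < i → x j = y j

lemma g2_add_cancel (a b c : G2) : a + b = a + c ↔ b = c := by
  constructor
  · intro h; exact add_left_cancel h
  · intro h; rw [h]

theorem stmt_11 (k : ℕ) (x y z : Fin k → G2)
    (hxy : x ≠ y) (hxz : x ≠ z) (hyz : y ≠ z)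
    (ixy ixz iyz : Fin k)
    (h1 : IsMinDiff x y ixy) (h2 : IsMinDiff x z ixz) (h3 : IsMinDiff y z iyz) :
    -- the triple is rainbow iff the three first-difference indices coincide
    ((x ixy + y ixy ≠ x ixz + z ixz ∧
      x ixy + y ixy ≠ y iyz + z iyz ∧
      x ixz + z ixz ≠ y iyz + z iyz) ↔ (ixy = ixz ∧ ixz = iyz)) ∧
    -- every non-rainbow triple has exactly one apex
    (¬(x ixy + y ixy ≠ x ixz + z ixz ∧
       x ixy + y ixy ≠ y iyz + z iyz ∧
       x ixz + z ixz ≠ y iyz + z iyz) →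
      (((ixy = ixz ∧ ixy < iyz) ∧ ¬(ixy = iyz ∧ ixy < ixz) ∧
          ¬(ixz = iyz ∧ ixz < ixy)) ∨
       (¬(ixy = ixz ∧ ixy < iyz) ∧ (ixy = iyz ∧ ixy < ixz) ∧
          ¬(ixz = iyz ∧ ixz < ixy)) ∨
       (¬(ixy = ixz ∧ ixy < iyz) ∧ ¬(ixy = iyz ∧ ixy < ixz) ∧
          (ixz = iyz ∧ ixz < ixy)))) := by
  obtain ⟨d1, e1⟩ := h1
  obtain ⟨d2, e2⟩ := h2
  obtain ⟨d3, e3⟩ := h3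
  have A1 : ¬(ixy < ixz ∧ ixy < iyz) := fun ⟨p, q⟩ => d1 ((e2 _ p).trans (e3 _ q).symm)
  have A2 : ¬(ixz < ixy ∧ ixz < iyz) := fun ⟨p, q⟩ => d2 ((e1 _ p).trans (e3 _ q))
  have A3 : ¬(iyz < ixy ∧ iyz < ixz) := fun ⟨p, q⟩ => d3 (((e1 _ p).symm).trans (e2 _ q))
  have key : (ixy = ixz ∧ ixz = iyz) ∨ (ixy = ixz ∧ ixy < iyz) ∨
      (ixy = iyz ∧ ixy < ixz) ∨ (ixz = iyz ∧ ixz < ixy) := by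
    simp only [Fin.lt_def, not_and, not_lt] at A1 A2 A3
    simp only [Fin.ext_iff, Fin.lt_def]
    omega
  -- if all three indices coincide, the triple is rainbow
  have rain : (ixy = ixz ∧ ixz = iyz) →
      (x ixy + y ixy ≠ x ixz + z ixz ∧ x ixy + y ixy ≠ y iyz + z iyz ∧
        x ixz + z ixz ≠ y iyz + z iyz) := by
    rintro ⟨rfl, h⟩
    subst h
    refine ⟨?_, ?_, ?_⟩
    · intro h; exact d3 (add_left_cancel h)
    · intro h
      rw [add_comm (y ixy) (z ixy)] at h
      exact d2 (add_right_cancel h)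
    · intro h; exact d1 (add_right_cancel h)
  -- in each degenerate case, two colors agree
  have C1 : ixy = ixz → ixy < iyz → x ixy + y ixy = x ixz + z ixz := by
    rintro rfl hlt; rw [e3 _ hlt]
  have C2 : ixy = iyz → ixy < ixz → x ixy + y ixy = y iyz + z iyz := by
    rintro rfl hlt; rw [← e2 _ hlt, add_comm]
  have C3 : ixz = iyz → ixz < ixy → x ixz + z ixz = y iyz + z iyz := by
    rintro rfl hlt; rw [e1 _ hlt]
  constructor
  · constructor
    · intro hr
      rcases key with h | ⟨ha, hb⟩ | ⟨ha, hb⟩ | ⟨ha, hb⟩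
      · exact h
      · exact absurd (C1 ha hb) hr.1
      · exact absurd (C2 ha hb) hr.2.1
      · exact absurd (C3 ha hb) hr.2.2
    · exact rain
  · intro hnr
    rcases key with h | ⟨ha, hb⟩ | ⟨ha, hb⟩ | ⟨ha, hb⟩
    · exact absurd (rain h) hnr
    · refine Or.inl ⟨⟨ha, hb⟩, ?_, ?_⟩ <;>
        (simp only [Fin.ext_iff, Fin.lt_def, not_and, not_lt] at ha hb ⊢; omega)
    · refine Or.inr (Or.inl ⟨?_, ⟨ha, hb⟩, ?_⟩) <;>
        (simp only [Fin.ext_iff, Fin.lt_def, not_and, not_lt] at ha hb ⊢; omega)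
    · refine Or.inr (Or.inr ⟨?_, ?_, ⟨ha, hb⟩⟩) <;>
        (simp only [Fin.ext_iff, Fin.lt_def, not_and, not_lt] at ha hb ⊢; omega)
end
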